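/- Let g be a Lie algebra over ℝ, g₊, g₋ ⊆ g Lie subalgebras with g = g₊ ⊕ g₋ as a vector space, P₊, P₋ the projections onto g₊ and g₋, and R = P₊ - P₋. Let a : g → g be a bijective linear map satisfying the intertwining property a[X, Y] = [aX, Y] = [X, aY] for all X, Y ∈ g. Then the bilinear operation [X, Y]_{Ra} := ½([R(aX), Y] + [X, R(aY)]) is antisymmetric and satisfies the Jacobi identity, i.e. R∘a is again a classical R-matrix. -/
import Mathlib


/-!
STATEMENT 16: if R = P₊ - P₋ is the R-matrix of a direct-sum decomposition
g = g₊ ⊕ g₋ into Lie subalgebras and a : g → g is a bijective intertwining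
operator (a[X,Y] = [aX,Y] = [X,aY]), then R∘a is again a classical R-matrix:
the bracket [X,Y]_{Ra} = ½([R(aX),Y] + [X,R(aY)]) is antisymmetric and
satisfies the Jacobi identity.
-/

/-- The candidate bracket [X,Y]_S = ½([SX,Y] + [X,SY]) of a linear operator S. -/
noncomputable def sBracket {g : Type*} [LieRing g] [LieAlgebra ℝ g]
    (S : g →ₗ[ℝ] g) (X Y : g) : g :=
  (1 / 2 : ℝ) • (⁅S X, Y⁆ + ⁅X, S Y⁆)

theorem r_matrix_compose_intertwiner
    (g : Type*) [LieRing g] [LieAlgebra ℝ g]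
    (gp gm : LieSubalgebra ℝ g)
    (hcompl : IsCompl gp.toSubmodule gm.toSubmodule)
    (Pp Pm : g →ₗ[ℝ] g)
    (hPp : ∀ X, Pp X ∈ gp) (hPm : ∀ X, Pm X ∈ gm)
    (hsum : ∀ X, Pp X + Pm X = X)
    (R : g →ₗ[ℝ] g) (hR : R = Pp - Pm)
    (a : g ≃ₗ[ℝ] g)
    (ha₁ : ∀ X Y : g, a ⁅X, Y⁆ = ⁅a X, Y⁆)
    (ha₂ : ∀ X Y : g, a ⁅X, Y⁆ = ⁅X, a Y⁆) :
    (∀ X Y : g, sBracket (R ∘ₗ (a : g →ₗ[ℝ] g)) X Y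
        = -sBracket (R ∘ₗ (a : g →ₗ[ℝ] g)) Y X) ∧
    (∀ X Y Z : g,
      sBracket (R ∘ₗ (a : g →ₗ[ℝ] g)) (sBracket (R ∘ₗ (a : g →ₗ[ℝ] g)) X Y) Z
        + sBracket (R ∘ₗ (a : g →ₗ[ℝ] g)) (sBracket (R ∘ₗ (a : g →ₗ[ℝ] g)) Y Z) X
        + sBracket (R ∘ₗ (a : g →ₗ[ℝ] g)) (sBracket (R ∘ₗ (a : g →ₗ[ℝ] g)) Z X) Y
        = 0) := by
  have hdis := hcompl.disjoint
  -- projections fix their ranges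
  have hPm0 : ∀ x ∈ gp, Pm x = 0 := by
    intro x hx
    have h2 : Pm x ∈ gp.toSubmodule := by
      have he : Pm x = x - Pp x := eq_sub_of_add_eq' (hsum x)
      rw [he]; exact sub_mem hx (hPp x)
    exact Submodule.disjoint_def.mp hdis _ h2 (hPm x)
  have hPp1 : ∀ x ∈ gp, Pp x = x := by
    intro x hx
    have := hsum x
    rw [hPm0 x hx, add_zero] at this; exact this
  have hPp0 : ∀ x ∈ gm, Pp x = 0 := by
    intro x hx
    have h2 : Pp x ∈ gm.toSubmodule := by
      have he : Pp x = x - Pm x := eq_sub_of_add_eq (hsum x)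
      rw [he]; exact sub_mem hx (hPm x)
    exact Submodule.disjoint_def.mp hdis _ (hPp x) h2
  have hPm1 : ∀ x ∈ gm, Pm x = x := by
    intro x hx
    have := hsum x
    rw [hPp0 x hx, zero_add] at this; exact this
  set B : g → g → g := fun u v => ⁅Pp u, Pp v⁆ - ⁅Pm u, Pm v⁆ with hB
  -- the R-bracket is the difference of projected brackets
  have hSB : ∀ u v : g, sBracket R u v = B u v := by
    intro u v
    have key : ∀ p m q n : g,
        (1 / 2 : ℝ) • (⁅p - m, q + n⁆ + ⁅p + m, q - n⁆) = ⁅p, q⁆ - ⁅m, n⁆ := by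
      intro p m q n
      simp only [lie_add, add_lie, lie_sub, sub_lie]
      module
    have h := key (Pp u) (Pm u) (Pp v) (Pm v)
    rw [hsum u, hsum v] at h
    simpa [sBracket, hR, LinearMap.sub_apply, hB] using h
  -- conjugation formula
  have hkey : ∀ X Y : g, sBracket (R ∘ₗ (a : g →ₗ[ℝ] g)) X Y
      = a.symm (B (a X) (a Y)) := by
    intro X Y
    have e1 : ⁅R (a X), Y⁆ = a.symm ⁅R (a X), a Y⁆ := by
      rw [← ha₂ (R (a X)) Y, a.symm_apply_apply]
    have e2 : ⁅X, R (a Y)⁆ = a.symm ⁅a X, R (a Y)⁆ := by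
      rw [← ha₁ X (R (a Y)), a.symm_apply_apply]
    have : sBracket (R ∘ₗ (a : g →ₗ[ℝ] g)) X Y
        = a.symm ((1 / 2 : ℝ) • (⁅R (a X), a Y⁆ + ⁅a X, R (a Y)⁆)) := by
      simp only [sBracket, LinearMap.comp_apply, LinearEquiv.coe_coe, e1, e2,
        map_add, map_smul]
    rw [this, ← sBracket, hSB]
  have hPpB : ∀ u v : g, Pp (B u v) = ⁅Pp u, Pp v⁆ := by
    intro u v
    simp only [hB, map_sub]
    rw [hPp1 _ (gp.lie_mem (hPp u) (hPp v)), hPp0 _ (gm.lie_mem (hPm u) (hPm v)),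
      sub_zero]
  have hPmB : ∀ u v : g, Pm (B u v) = -⁅Pm u, Pm v⁆ := by
    intro u v
    simp only [hB, map_sub]
    rw [hPm0 _ (gp.lie_mem (hPp u) (hPp v)), hPm1 _ (gm.lie_mem (hPm u) (hPm v)),
      zero_sub]
  have hBjac : ∀ u v w : g, B (B u v) w + B (B v w) u + B (B w u) v = 0 := by
    intro u v w
    simp only [hB]
    rw [hPpB, hPmB, hPpB, hPmB, hPpB, hPmB]
    have jac : ∀ x y z : g, ⁅⁅x, y⁆, z⁆ + ⁅⁅y, z⁆, x⁆ + ⁅⁅z, x⁆, y⁆ = 0 := by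
      intro x y z
      have := lie_jacobi z x y
      rw [← lie_skew ⁅x, y⁆ z, ← lie_skew ⁅y, z⁆ x, ← lie_skew ⁅z, x⁆ y]
      linear_combination (norm := abel) -this
    have h1 := jac (Pp u) (Pp v) (Pp w)
    have h2 := jac (Pm u) (Pm v) (Pm w)
    calc (⁅⁅Pp u, Pp v⁆, Pp w⁆ - ⁅-⁅Pm u, Pm v⁆, Pm w⁆)
          + (⁅⁅Pp v, Pp w⁆, Pp u⁆ - ⁅-⁅Pm v, Pm w⁆, Pm u⁆)
          + (⁅⁅Pp w, Pp u⁆, Pp v⁆ - ⁅-⁅Pm w, Pm u⁆, Pm v⁆)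
        = (⁅⁅Pp u, Pp v⁆, Pp w⁆ + ⁅⁅Pp v, Pp w⁆, Pp u⁆ + ⁅⁅Pp w, Pp u⁆, Pp v⁆)
          + (⁅⁅Pm u, Pm v⁆, Pm w⁆ + ⁅⁅Pm v, Pm w⁆, Pm u⁆ + ⁅⁅Pm w, Pm u⁆, Pm v⁆) := by
          simp only [neg_lie]; abel
      _ = 0 := by rw [h1, h2, add_zero]
  constructor
  · intro X Y
    simp only [sBracket, ← smul_neg]
    congr 1
    rw [← lie_skew ((R ∘ₗ (a : g →ₗ[ℝ] g)) X) Y, ← lie_skew X ((R ∘ₗ (a : g →ₗ[ℝ] g)) Y)]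
    abel
  · intro X Y Z
    simp only [hkey, a.apply_symm_apply]
    rw [← map_add, ← map_add, hBjac, map_zero]
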